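/- Let 0 < α < ∞ and θ ≥ 1, and let U be a θ-regular kernel. Then there exists a constant C (depending only on α and θ) such that for any finite index set, any increasing sequence {t_k} of points in (0,∞], and any nonnegative sequence {a_k}_{k=k_min}^{k_max−1} satisfying a_{k+1} ≥ 2θ^α·a_k for all k ≤ k_max − 2, it holds that ∑_{k=k_min}^{k_max−1} a_k · U^α(t_k, t_{k_max}) ≤ C · ∑_{k=k_min}^{k_max−1} a_k · U^α(t_k, t_{k+1}). -/

import Mathlib

open Finset

def ThetaRegular (θ : ℝ) (U : ℝ → ℝ → ℝ) : Prop :=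
  (∀ x y, 0 ≤ U x y) ∧
  (∀ y x₁ x₂, 0 ≤ x₁ → x₁ ≤ x₂ → U x₂ y ≤ U x₁ y) ∧
  (∀ x y₁ y₂, y₁ ≤ y₂ → U x y₁ ≤ U x y₂) ∧
  (∀ x y z, 0 ≤ x → x < y → y < z → U x z ≤ θ * (U x y + U y z)) ∧
  (∀ y, 0 < y → 0 < U 0 y)

/-!
Raise the θ-triangle inequality `U(t_k, T) ≤ θ (U(t_k, t_{k+1}) + U(t_{k+1}, T))` to the power `α`
and split `(u + v) ^ α ≤ K u ^ α + (3/2) v ^ α`. Since `(3/2) θ ^ α a_k ≤ (3/4) a_{k+1}`, the terms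
`S_k := a_k U^α(t_k, T)` and `V_k := a_k U^α(t_k, t_{k+1})` satisfy
`S_k ≤ θ ^ α K V_k + (3/4) S_{k+1}`, while the last terms agree. Summing, the right-hand side
contains at most `3/4` of `∑ S`, which is absorbed into the left: `∑ S ≤ 4 θ ^ α K ∑ V`.
-/

theorem Finset.sum_Icc_eq_add_sum_Ico_succ {M : Type*} [AddCommMonoid M] (S : ℤ → M) {m n : ℤ}
    (hmn : m ≤ n) :
    ∑ k ∈ Icc m n, S k = S m + ∑ k ∈ Ico m n, S (k + 1) := by
  rw [sum_Ico_add', ← Ioc_insert_left hmn, sum_insert left_notMem_Ioc]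
  congr 2
  ext k
  simp only [mem_Ioc, mem_Ico]
  omega

theorem sum_Icc_le_div_of_le_add_succ {S V : ℤ → ℝ} {m n : ℤ} {K ρ : ℝ} (hmn : m ≤ n)
    (hρ₀ : 0 ≤ ρ) (hρ₁ : ρ < 1) (hSm : 0 ≤ S m)
    (hstep : ∀ k ∈ Ico m n, S k ≤ K * V k + ρ * S (k + 1)) (hlast : S n ≤ K * V n) :
    ∑ k ∈ Icc m n, S k ≤ K / (1 - ρ) * ∑ k ∈ Icc m n, V k := by
  have hsum : ∑ k ∈ Icc m n, S k ≤ K * ∑ k ∈ Icc m n, V k + ρ * ∑ k ∈ Icc m n, S k := calc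
    ∑ k ∈ Icc m n, S k = ∑ k ∈ Ico m n, S k + S n := sum_Icc_eq_sum_Ico_add S hmn
    _ ≤ ∑ k ∈ Ico m n, (K * V k + ρ * S (k + 1)) + K * V n := by
      gcongr with k hk; exact hstep k hk
    _ = K * ∑ k ∈ Icc m n, V k + ρ * (∑ k ∈ Icc m n, S k - S m) := by
      rw [sum_Icc_eq_sum_Ico_add V hmn, sum_Icc_eq_add_sum_Ico_succ S hmn, sum_add_distrib,
        ← mul_sum, ← mul_sum]
      ring
    _ ≤ K * ∑ k ∈ Icc m n, V k + ρ * ∑ k ∈ Icc m n, S k := by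
      gcongr; linarith
  rw [div_mul_eq_mul_div, le_div_iff₀ (by linarith)]
  linarith

theorem Real.exists_rpow_add_le {α c : ℝ} (hα : 0 < α) (hc : 1 < c) :
    ∃ K, 1 ≤ K ∧ ∀ x y : ℝ, 0 ≤ x → 0 ≤ y → (x + y) ^ α ≤ K * x ^ α + c * y ^ α := by
  set q := c⁻¹ ^ α⁻¹
  have hq₀ : 0 < q := by positivity
  have hq₁ : q < 1 := Real.rpow_lt_one (by positivity) (inv_lt_one_of_one_lt₀ hc) (by positivity)
  have hqα : q ^ α = c⁻¹ := Real.rpow_inv_rpow (by positivity) hα.ne'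
  have hq' : 0 < 1 - q := by linarith
  refine ⟨((1 - q) ^ α)⁻¹,
    one_le_inv₀ (by positivity) |>.mpr (Real.rpow_le_one hq'.le (by linarith) hα.le),
    fun x y hx hy => ?_⟩
  -- `x + y` is the convex combination `(1 - q) • (x / (1 - q)) + q • (y / q)`
  have hmax : x + y ≤ max (x / (1 - q)) (y / q) := by
    have hx' : x ≤ (1 - q) * max (x / (1 - q)) (y / q) := by
      rw [← div_le_iff₀' hq']; exact le_max_left _ _
    have hy' : y ≤ q * max (x / (1 - q)) (y / q) := by
      rw [← div_le_iff₀' hq₀]; exact le_max_right _ _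
    linarith
  calc (x + y) ^ α ≤ max (x / (1 - q)) (y / q) ^ α := by gcongr
    _ ≤ (x / (1 - q)) ^ α + (y / q) ^ α := by
      rcases max_choice (x / (1 - q)) (y / q) with h | h <;> rw [h]
      · exact le_add_of_nonneg_right (by positivity)
      · exact le_add_of_nonneg_left (by positivity)
    _ = _ := by
      rw [Real.div_rpow hx hq'.le, Real.div_rpow hy hq₀.le, hqα]
      field_simp

theorem ThetaRegular.rpow_le {θ α K c : ℝ} {U : ℝ → ℝ → ℝ} (hU : ThetaRegular θ U) (hθ : 0 ≤ θ)
    (hα : 0 ≤ α) (hK : ∀ x y : ℝ, 0 ≤ x → 0 ≤ y → (x + y) ^ α ≤ K * x ^ α + c * y ^ α)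
    {x y z : ℝ} (hx : 0 ≤ x) (hxy : x < y) (hyz : y < z) :
    U x z ^ α ≤ θ ^ α * K * U x y ^ α + θ ^ α * c * U y z ^ α := by
  obtain ⟨hU₀, -, -, hUtri, -⟩ := hU
  calc U x z ^ α ≤ (θ * (U x y + U y z)) ^ α := by
        gcongr
        · exact hU₀ x z
        · exact hUtri x y z hx hxy hyz
    _ = θ ^ α * (U x y + U y z) ^ α := Real.mul_rpow hθ (add_nonneg (hU₀ x y) (hU₀ y z))
    _ ≤ θ ^ α * (K * U x y ^ α + c * U y z ^ α) := by
        gcongr; exact hK _ _ (hU₀ x y) (hU₀ y z)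
    _ = _ := by ring

theorem ThetaRegular.mul_rpow_le_of_two_mul_le {θ α K c : ℝ} {U : ℝ → ℝ → ℝ}
    (hU : ThetaRegular θ U) (hθ : 0 ≤ θ) (hα : 0 ≤ α) (hc : 0 ≤ c)
    (hK : ∀ x y : ℝ, 0 ≤ x → 0 ≤ y → (x + y) ^ α ≤ K * x ^ α + c * y ^ α)
    {x y z : ℝ} (hx : 0 ≤ x) (hxy : x < y) (hyz : y < z) {a b : ℝ} (ha : 0 ≤ a)
    (hab : 2 * θ ^ α * a ≤ b) :
    a * U x z ^ α ≤ θ ^ α * K * (a * U x y ^ α) + c / 2 * (b * U y z ^ α) := by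
  have hUyz := Real.rpow_nonneg (hU.1 y z) α
  calc a * U x z ^ α ≤ a * (θ ^ α * K * U x y ^ α + θ ^ α * c * U y z ^ α) := by
        gcongr; exact hU.rpow_le hθ hα hK hx hxy hyz
    _ = θ ^ α * K * (a * U x y ^ α) + c / 2 * (2 * θ ^ α * a * U y z ^ α) := by ring
    _ ≤ θ ^ α * K * (a * U x y ^ α) + c / 2 * (b * U y z ^ α) := by gcongr

theorem stmt_4 (α θ : ℝ) (hα : 0 < α) (hθ : 1 ≤ θ)
    (U : ℝ → ℝ → ℝ) (hU : ThetaRegular θ U) :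
    ∃ C : ℝ, 0 < C ∧
      ∀ (kmin kmax : ℤ), kmin ≤ kmax →
        ∀ (t : ℤ → ℝ) (a : ℤ → ℝ),
          (∀ k ∈ Finset.Icc kmin kmax, 0 < t k) →
          (∀ k ∈ Finset.Icc kmin kmax, ∀ l ∈ Finset.Icc kmin kmax, k < l → t k < t l) →
          (∀ k, 0 ≤ a k) →
          (∀ k, kmin ≤ k → k ≤ kmax - 2 → 2 * θ ^ α * a k ≤ a (k + 1)) →
          ∑ k ∈ Finset.Icc kmin (kmax - 1), a k * (U (t k) (t kmax)) ^ α ≤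
            C * ∑ k ∈ Finset.Icc kmin (kmax - 1), a k * (U (t k) (t (k + 1))) ^ α := by
  obtain ⟨K, hK₁, hK⟩ := Real.exists_rpow_add_le hα (by norm_num : (1 : ℝ) < 3 / 2)
  have hθK : 1 ≤ θ ^ α * K := one_le_mul_of_one_le_of_one_le (Real.one_le_rpow hθ hα.le) hK₁
  refine ⟨θ ^ α * K / (1 - 3 / 4), by positivity, ?_⟩
  intro kmin kmax _ t a ht hmono ha hgrow
  rcases lt_or_ge (kmax - 1) kmin with hempty | hne
  · simp [Icc_eq_empty_of_lt hempty]
  have ht_lt : ∀ k l, kmin ≤ k → k < l → l ≤ kmax → t k < t l := fun k l hk hkl hl =>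
    hmono k (mem_Icc.2 ⟨hk, by omega⟩) l (mem_Icc.2 ⟨by omega, hl⟩) hkl
  have hS₀ : ∀ k x, 0 ≤ a k * U (t k) x ^ α := fun k x =>
    mul_nonneg (ha k) (Real.rpow_nonneg (hU.1 _ _) _)
  refine sum_Icc_le_div_of_le_add_succ hne (by norm_num) (by norm_num) (hS₀ _ _) (fun k hk => ?_) ?_
  · obtain ⟨hk₁, hk₂⟩ := mem_Ico.1 hk
    convert hU.mul_rpow_le_of_two_mul_le (by positivity) hα.le (by norm_num) hK
      (ht k (mem_Icc.2 ⟨hk₁, by omega⟩)).le (ht_lt k (k + 1) hk₁ (by omega) (by omega))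
      (ht_lt (k + 1) kmax (by omega) (by omega) le_rfl) (ha k) (hgrow k hk₁ (by omega)) using 2
    norm_num
  · rw [sub_add_cancel]
    exact le_mul_of_one_le_left (hS₀ _ _) hθK
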